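/- arXiv:2512.05399 — 2 statements merged into one kernel-verified Lean document; each statement's English description precedes it below -/
import Mathlib

section
/- Let D be a finite multiset of points in ℝ^r and S a uniform random sample of size k from D without replacement. Fix a 'bad' family of thresholds Θ̄ (those with true recall below T on D). Then the failure probability P_{S∼D}(∃Θ ∈ Θ̄ : R_S(Θ) ≥ T') is unchanged if D is replaced by any dataset D' obtained from D by a bijection σ of points and strictly monotone transformations applied independently to each coordinate (i.e., D'_{σ(i),j} = f_j(D_{i,j}) for strictly increasing f_j). In particular, failure probability depends only on the coordinatewise order structure of D. -/
open scoped Classical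

noncomputable section

def domSet {n r : ℕ} (D : Fin n → Fin r → ℝ) (Θ : Fin r → ℝ) : Finset (Fin n) :=
  Finset.univ.filter (fun i => ∀ j, D i j ≤ Θ j)

def trueRecall {n r : ℕ} (D : Fin n → Fin r → ℝ) (Θ : Fin r → ℝ) : ℝ :=
  ((domSet D Θ).card : ℝ) / (n : ℝ)

def sampleRecall {n r : ℕ} (D : Fin n → Fin r → ℝ) (S : Finset (Fin n))
    (Θ : Fin r → ℝ) : ℝ :=
  ((domSet D Θ ∩ S).card : ℝ) / (S.card : ℝ)

/-- The set of size-`k` samples exhibiting a spurious high-recall threshold. -/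
def failSet {n r : ℕ} (k : ℕ) (D : Fin n → Fin r → ℝ) (T T' : ℝ) :
    Finset (Finset (Fin n)) :=
  ((Finset.univ : Finset (Fin n)).powersetCard k).filter
    (fun S => ∃ Θ : Fin r → ℝ, trueRecall D Θ < T ∧ T' ≤ sampleRecall D S Θ)

lemma domSet_map_of_iff {n r : ℕ} (D D' : Fin n → Fin r → ℝ) (σ : Equiv.Perm (Fin n))
    (Θ Θ' : Fin r → ℝ) (h : ∀ i j, D i j ≤ Θ j ↔ D' (σ i) j ≤ Θ' j) :
    domSet D' Θ' = (domSet D Θ).map σ.toEmbedding := by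
  ext i'
  simp only [domSet, Finset.mem_filter, Finset.mem_univ, true_and, Finset.mem_map,
    Equiv.coe_toEmbedding]
  constructor
  · intro hi
    refine ⟨σ.symm i', fun j => ?_, by simp⟩
    have := hi j
    rw [← σ.apply_symm_apply i'] at this
    exact (h _ j).mpr this
  · rintro ⟨a, ha, rfl⟩ j
    exact (h a j).mp (ha j)

lemma recall_eq {n r : ℕ} (D D' : Fin n → Fin r → ℝ) (σ : Equiv.Perm (Fin n))
    (Θ Θ' : Fin r → ℝ) (h : domSet D' Θ' = (domSet D Θ).map σ.toEmbedding)
    (S : Finset (Fin n)) :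
    trueRecall D' Θ' = trueRecall D Θ ∧
      sampleRecall D' (S.map σ.toEmbedding) Θ' = sampleRecall D S Θ := by
  constructor
  · simp [trueRecall, h]
  · rw [sampleRecall, sampleRecall, h, ← Finset.map_inter, Finset.card_map, Finset.card_map]

lemma exists_theta {n r : ℕ} (hn : 0 < n) (D : Fin n → Fin r → ℝ)
    (f : Fin r → ℝ → ℝ) (hf : ∀ j, StrictMono (f j)) (Θ' : Fin r → ℝ) :
    ∃ Θ : Fin r → ℝ, ∀ i j, D i j ≤ Θ j ↔ f j (D i j) ≤ Θ' j := by
  haveI : Nonempty (Fin n) := ⟨⟨0, hn⟩⟩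
  have hne : (Finset.univ : Finset (Fin n)).Nonempty := Finset.univ_nonempty
  refine ⟨fun j => if h : (Finset.univ.filter (fun i => f j (D i j) ≤ Θ' j)).Nonempty
    then (Finset.univ.filter (fun i => f j (D i j) ≤ Θ' j)).sup' h (fun i => D i j)
    else Finset.univ.inf' hne (fun i => D i j) - 1, fun i j => ?_⟩
  dsimp only
  split_ifs with h
  · constructor
    · intro hle
      obtain ⟨i₀, hi₀, he⟩ := Finset.exists_mem_eq_sup' h (fun i => D i j)
      rw [he] at hle
      simp only [Finset.mem_filter] at hi₀
      exact le_trans ((hf j).monotone hle) hi₀.2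
    · intro hle
      exact Finset.le_sup' (f := fun i => D i j)
        (Finset.mem_filter.mpr ⟨Finset.mem_univ i, hle⟩)
  · constructor
    · intro hle
      exfalso
      have : Finset.univ.inf' hne (fun i => D i j) ≤ D i j :=
        Finset.inf'_le _ (Finset.mem_univ i)
      linarith
    · intro hle
      exact absurd ⟨i, Finset.mem_filter.mpr ⟨Finset.mem_univ i, hle⟩⟩ h

/-- The failure probability is invariant under relabeling the points by a bijection and
applying a strictly increasing transformation independently to each coordinate: it
depends only on the coordinatewise order structure of the dataset. -/
theorem stmt6 {n r : ℕ} (k : ℕ) (T T' : ℝ)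
    (D D' : Fin n → Fin r → ℝ) (σ : Equiv.Perm (Fin n))
    (f : Fin r → ℝ → ℝ) (hf : ∀ j, StrictMono (f j))
    (hD' : ∀ i j, D' (σ i) j = f j (D i j)) :
    (((failSet k D T T').card : ℝ)
        / ((((Finset.univ : Finset (Fin n)).powersetCard k)).card : ℝ))
      = (((failSet k D' T T').card : ℝ)
        / ((((Finset.univ : Finset (Fin n)).powersetCard k)).card : ℝ)) := by
  rcases Nat.eq_zero_or_pos n with hn | hn
  · subst hn
    have : D = D' := funext fun i => i.elim0
    rw [this]
  congr 2
  refine Finset.card_bij (fun S _ => S.map σ.toEmbedding) ?_ ?_ ?_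
  · intro S hS
    simp only [failSet, Finset.mem_filter, Finset.mem_powersetCard_univ] at hS ⊢
    obtain ⟨hcard, Θ, h1, h2⟩ := hS
    have hds : domSet D' (fun j => f j (Θ j)) = (domSet D Θ).map σ.toEmbedding := by
      refine domSet_map_of_iff D D' σ _ _ fun i j => ?_
      rw [hD' i j]
      exact ⟨fun h => (hf j).monotone h, fun h => (hf j).le_iff_le.mp h⟩
    obtain ⟨e1, e2⟩ := recall_eq D D' σ Θ _ hds S
    exact ⟨by simp [hcard], fun j => f j (Θ j), by rw [e1]; exact h1, by rw [e2]; exact h2⟩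
  · intro S1 _ S2 _ he
    have := congrArg (fun t => t.map σ.symm.toEmbedding) he
    simpa [Finset.map_map] using this
  · intro S' hS'
    refine ⟨S'.map σ.symm.toEmbedding, ?_, ?_⟩
    · simp only [failSet, Finset.mem_filter, Finset.mem_powersetCard_univ] at hS' ⊢
      obtain ⟨hcard, Θ', h1, h2⟩ := hS'
      obtain ⟨Θ, hΘ⟩ := exists_theta hn D f hf Θ'
      have hds : domSet D' Θ' = (domSet D Θ).map σ.toEmbedding := by
        refine domSet_map_of_iff D D' σ _ _ fun i j => ?_
        rw [hD' i j]
        exact hΘ i j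
      have hS'eq : (S'.map σ.symm.toEmbedding).map σ.toEmbedding = S' := by
        simp [Finset.map_map]
      obtain ⟨e1, e2⟩ := recall_eq D D' σ Θ Θ' hds (S'.map σ.symm.toEmbedding)
      rw [hS'eq] at e2
      exact ⟨by simp [hcard], Θ, by rw [← e1]; exact h1, by rw [← e2]; exact h2⟩
    · simp [Finset.map_map]

end
end

section
/- Let D⁺ be n⁺ points in ℝ^1 (one-dimensional distances) with distinct values, T ∈ (0,1), and let S⁺ be a uniform size-k⁺ sample without replacement. Let m = ⌈n⁺T⌉ − 1 be the largest number of points a below-target threshold can capture, and let A be the set of m points with the smallest values. Then the event {∃θ with true recall < T and observed recall ≥ T'} equals the event {|A ∩ S⁺| ≥ ⌈T'k⁺⌉}, and hence its probability equals P(H ≥ ⌈T'k⁺⌉) where H is hypergeometric with population n⁺, success count m, and sample size k⁺. -/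
open scoped Classical

noncomputable section

/-- True recall of a one-dimensional threshold `θ` on the dataset `D`. -/
def trueRecall1 {n : ℕ} (D : Fin n → ℝ) (θ : ℝ) : ℝ :=
  ((Finset.univ.filter (fun i => D i ≤ θ)).card : ℝ) / (n : ℝ)

/-- Recall of `θ` observed on a sample `S` of size `k`. -/
def sampleRecall1 {n : ℕ} (D : Fin n → ℝ) (S : Finset (Fin n)) (θ : ℝ) : ℝ :=
  ((S.filter (fun i => D i ≤ θ)).card : ℝ) / (S.card : ℝ)

lemma count_inter_card {n : ℕ} (k t : ℕ) (ht : t ≤ k) (A : Finset (Fin n)) :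
    (((Finset.univ : Finset (Fin n)).powersetCard k).filter
      (fun S => (A ∩ S).card = t)).card
    = (A.card.choose t) * ((n - A.card).choose (k - t)) := by
  have key : (((Finset.univ : Finset (Fin n)).powersetCard k).filter
      (fun S => (A ∩ S).card = t)).card
      = ((A.powersetCard t) ×ˢ (Aᶜ.powersetCard (k - t))).card := by
    apply Finset.card_nbij' (fun S => (S ∩ A, S \ A)) (fun P => P.1 ∪ P.2)
    · intro S hS
      simp only [Finset.mem_coe, Finset.mem_filter, Finset.mem_powersetCard_univ] at hS
      obtain ⟨hScard, hSt⟩ := hS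
      simp only [Finset.mem_coe, Finset.mem_product, Finset.mem_powersetCard]
      refine ⟨⟨Finset.inter_subset_right, ?_⟩, ?_, ?_⟩
      · rw [Finset.inter_comm]; exact hSt
      · intro x hx
        simp only [Finset.mem_sdiff] at hx
        simp [hx.2]
      · have : (S \ A).card = S.card - (S ∩ A).card := by
          rw [Finset.card_sdiff_add_card_inter S A |>.symm] at hScard ⊢
          omega
        rw [this, hScard, Finset.inter_comm, hSt]
    · intro P hP
      simp only [Finset.mem_coe, Finset.mem_product, Finset.mem_powersetCard] at hP
      obtain ⟨⟨hP1, hP1c⟩, hP2, hP2c⟩ := hP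
      have hdisj : Disjoint P.1 P.2 := by
        refine Finset.disjoint_left.mpr fun x hx1 hx2 => ?_
        exact (Finset.mem_compl.mp (hP2 hx2)) (hP1 hx1)
      simp only [Finset.mem_coe, Finset.mem_filter, Finset.mem_powersetCard_univ]
      constructor
      · rw [Finset.card_union_of_disjoint hdisj, hP1c, hP2c]; omega
      · rw [Finset.inter_comm, Finset.union_inter_distrib_right]
        have h2 : P.2 ∩ A = ∅ := by
          refine Finset.eq_empty_of_forall_notMem fun x hx => ?_
          simp only [Finset.mem_inter] at hx
          exact (Finset.mem_compl.mp (hP2 hx.1)) hx.2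
        rw [h2, Finset.union_empty, Finset.inter_eq_left.mpr hP1, hP1c]
    · intro S hS
      ext x; simp only [Finset.mem_union, Finset.mem_inter, Finset.mem_sdiff]; tauto
    · intro P hP
      simp only [Finset.mem_coe, Finset.mem_product, Finset.mem_powersetCard] at hP
      obtain ⟨⟨hP1, hP1c⟩, hP2, hP2c⟩ := hP
      have e1 : (P.1 ∪ P.2) ∩ A = P.1 := by
        ext x
        simp only [Finset.mem_inter, Finset.mem_union]
        constructor
        · rintro ⟨hx1 | hx2, hxA⟩
          · exact hx1
          · exact absurd hxA (Finset.mem_compl.mp (hP2 hx2))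
        · intro hx; exact ⟨Or.inl hx, hP1 hx⟩
      have e2 : (P.1 ∪ P.2) \ A = P.2 := by
        ext x
        simp only [Finset.mem_sdiff, Finset.mem_union]
        constructor
        · rintro ⟨hx1 | hx2, hxA⟩
          · exact absurd (hP1 hx1) hxA
          · exact hx2
        · intro hx; exact ⟨Or.inr hx, Finset.mem_compl.mp (hP2 hx)⟩
      show ((P.1 ∪ P.2) ∩ A, (P.1 ∪ P.2) \ A) = P; rw [e1, e2]
  rw [key, Finset.card_product, Finset.card_powersetCard, Finset.card_powersetCard,
    Finset.card_compl, Fintype.card_fin]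

/-- In one dimension with distinct values, the failure event coincides with drawing at
least `⌈T'k⁺⌉` of the `m = ⌈n⁺T⌉ − 1` smallest points, so its probability is the
hypergeometric tail `P(H ≥ ⌈T'k⁺⌉)` with `H ∼ Hypergeometric(n⁺, m, k⁺)`. -/
theorem stmt15 {nPos : ℕ} (kPos : ℕ) (hk : 0 < kPos) (hkn : kPos ≤ nPos)
    (D : Fin nPos → ℝ) (hinj : Function.Injective D)
    (T T' : ℝ) (hT : T ∈ Set.Ioo (0 : ℝ) 1) (hT' : T < T') (hT'1 : T' ≤ 1)
    (m : ℕ) (hm : (m : ℤ) = ⌈(nPos : ℝ) * T⌉ - 1)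
    (A : Finset (Fin nPos)) (hA : A.card = m)
    (hAsmall : ∀ i ∈ A, ∀ i' ∉ A, D i < D i') :
    (((Finset.univ : Finset (Fin nPos)).powersetCard kPos).filter
        (fun S => ∃ θ : ℝ, trueRecall1 D θ < T ∧ T' ≤ sampleRecall1 D S θ))
      = (((Finset.univ : Finset (Fin nPos)).powersetCard kPos).filter
        (fun S => ⌈T' * kPos⌉₊ ≤ (A ∩ S).card)) ∧
    (((((Finset.univ : Finset (Fin nPos)).powersetCard kPos).filter
        (fun S => ∃ θ : ℝ, trueRecall1 D θ < T ∧ T' ≤ sampleRecall1 D S θ)).card : ℝ)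
        / (nPos.choose kPos : ℝ))
      = (∑ t ∈ Finset.Icc ⌈T' * kPos⌉₊ kPos,
          ((m.choose t : ℝ) * ((nPos - m).choose (kPos - t) : ℝ)))
        / (nPos.choose kPos : ℝ) := by
  obtain ⟨hT0, hT1⟩ := hT
  have hn : 0 < nPos := lt_of_lt_of_le hk hkn
  have hnR : (0:ℝ) < nPos := by exact_mod_cast hn
  have hkR : (0:ℝ) < (kPos:ℝ) := by exact_mod_cast hk
  have hT'pos : 0 < T' := lt_trans hT0 hT'
  set c := ⌈T' * (kPos:ℝ)⌉₊ with hc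
  have hmlt : (m:ℝ) < (nPos:ℝ) * T := by
    have h1 : (m:ℝ) = ((⌈(nPos:ℝ)*T⌉ : ℤ) : ℝ) - 1 := by exact_mod_cast hm
    have h2 := Int.ceil_lt_add_one ((nPos:ℝ)*T)
    linarith
  have hiff : ∀ S : Finset (Fin nPos), S.card = kPos →
      ((∃ θ : ℝ, trueRecall1 D θ < T ∧ T' ≤ sampleRecall1 D S θ) ↔ c ≤ (A ∩ S).card) := by
    intro S hScard
    constructor
    · rintro ⟨θ, h1, h2⟩
      set B := Finset.univ.filter (fun i => D i ≤ θ) with hB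
      have hBcard : B.card ≤ m := by
        unfold trueRecall1 at h1
        rw [div_lt_iff₀ hnR] at h1
        have h3 : (B.card : ℤ) < ⌈(nPos:ℝ)*T⌉ := Int.lt_ceil.mpr (by push_cast; linarith)
        omega
      have hBA : B ⊆ A := by
        intro i hi
        by_contra hiA
        have hAB : insert i A ⊆ B := by
          intro j hj
          rcases Finset.mem_insert.mp hj with rfl | hj
          · exact hi
          · have hji : D j < D i := hAsmall j hj i hiA
            have hDi : D i ≤ θ := (Finset.mem_filter.mp hi).2
            exact Finset.mem_filter.mpr ⟨Finset.mem_univ _, le_of_lt (lt_of_lt_of_le hji hDi)⟩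
        have hle := Finset.card_le_card hAB
        rw [Finset.card_insert_of_notMem hiA, hA] at hle
        omega
      have hSB : S.filter (fun i => D i ≤ θ) = S ∩ B := by
        ext x
        simp only [Finset.mem_filter, Finset.mem_inter, hB, Finset.mem_univ, true_and]
      have h4 : T' * (kPos:ℝ) ≤ ((S ∩ B).card : ℝ) := by
        unfold sampleRecall1 at h2
        rw [hScard, le_div_iff₀ hkR] at h2
        rw [hSB] at h2
        exact h2
      have h5 : c ≤ (S ∩ B).card := Nat.ceil_le.mpr h4
      have h6 : S ∩ B ⊆ A ∩ S := by
        intro x hx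
        rw [Finset.mem_inter] at hx ⊢
        exact ⟨hBA hx.2, hx.1⟩
      exact le_trans h5 (Finset.card_le_card h6)
    · intro hc'
      have hcpos : 0 < c := Nat.ceil_pos.mpr (by positivity)
      have hAne : A.Nonempty := by
        rw [← Finset.card_pos, hA]
        by_contra h
        have hle : (A ∩ S).card ≤ A.card := Finset.card_le_card Finset.inter_subset_left
        omega
      set θ := A.sup' hAne D with hθ
      obtain ⟨i₀, hi₀, hθeq⟩ := Finset.exists_mem_eq_sup' hAne D
      have hfilt : Finset.univ.filter (fun i => D i ≤ θ) = A := by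
        ext x
        simp only [Finset.mem_filter, Finset.mem_univ, true_and]
        constructor
        · intro hx
          by_contra hxA
          have hlt := hAsmall i₀ hi₀ x hxA
          rw [← hθeq] at hlt
          exact absurd hx (not_le.mpr hlt)
        · intro hx; exact Finset.le_sup' D hx
      refine ⟨θ, ?_, ?_⟩
      · unfold trueRecall1
        rw [hfilt, hA, div_lt_iff₀ hnR]
        linarith
      · unfold sampleRecall1
        have hSA : S.filter (fun i => D i ≤ θ) = A ∩ S := by
          ext x
          have hx := Finset.ext_iff.mp hfilt x
          simp only [Finset.mem_filter, Finset.mem_univ, true_and] at hx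
          simp only [Finset.mem_filter, Finset.mem_inter, hx]
          tauto
        rw [hSA, hScard, le_div_iff₀ hkR]
        calc T' * (kPos:ℝ) ≤ (c:ℝ) := Nat.le_ceil _
          _ ≤ ((A ∩ S).card : ℝ) := by exact_mod_cast hc'
  have hset : (((Finset.univ : Finset (Fin nPos)).powersetCard kPos).filter
        (fun S => ∃ θ : ℝ, trueRecall1 D θ < T ∧ T' ≤ sampleRecall1 D S θ))
      = (((Finset.univ : Finset (Fin nPos)).powersetCard kPos).filter
        (fun S => c ≤ (A ∩ S).card)) := by
    apply Finset.filter_congr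
    intro S hS
    exact hiff S (Finset.mem_powersetCard_univ.mp hS)
  refine ⟨hset, ?_⟩
  rw [hset]
  congr 1
  have hcount : ((((Finset.univ : Finset (Fin nPos)).powersetCard kPos).filter
      (fun S => c ≤ (A ∩ S).card)).card)
      = ∑ t ∈ Finset.Icc c kPos, m.choose t * (nPos - m).choose (kPos - t) := by
    rw [Finset.card_eq_sum_card_fiberwise (f := fun S => (A ∩ S).card)
      (t := Finset.Icc c kPos) ?hmem]
    case hmem =>
      intro S hS
      simp only [Finset.mem_coe, Finset.mem_filter, Finset.mem_powersetCard_univ] at hS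
      rw [Finset.mem_coe, Finset.mem_Icc]
      refine ⟨hS.2, ?_⟩
      calc (A ∩ S).card ≤ S.card := Finset.card_le_card Finset.inter_subset_right
        _ = kPos := hS.1
    apply Finset.sum_congr rfl
    intro t ht
    rw [Finset.mem_Icc] at ht
    have hfib : ((((Finset.univ : Finset (Fin nPos)).powersetCard kPos).filter
        (fun S => c ≤ (A ∩ S).card)).filter (fun S => (A ∩ S).card = t))
        = (((Finset.univ : Finset (Fin nPos)).powersetCard kPos).filter
          (fun S => (A ∩ S).card = t)) := by
      rw [Finset.filter_filter]
      apply Finset.filter_congr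
      intro S _
      constructor
      · exact fun h => h.2
      · intro h; exact ⟨by omega, h⟩
    rw [hfib, count_inter_card kPos t ht.2 A, hA]
  rw [hcount]
  push_cast
  rfl

end
end
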